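/- Let H be a finite-dimensional real inner product space, let a : ℝ → ℝ be continuously differentiable, b : ℝ → ℝ be continuous, and let U : H × ℝ → ℝ be continuously differentiable, with ∇_w U(w,t) denoting its gradient in the first argument and ∂U/∂t(w,t) its partial derivative in the second argument. Let w : ℝ → H be twice continuously differentiable and satisfy, for all t ≥ t₀, the second-order ODE a(t)·ẅ(t) + b(t)·ẇ(t) + ∇_w U(w(t),t) = 0. Then for all t ≥ t₀ the following energy conservation law holds: (a(t)/2)·‖ẇ(t)‖² + ∫_{t₀}^{t} (b(s) − ȧ(s)/2)·‖ẇ(s)‖² ds + U(w(t),t) − ∫_{t₀}^{t} (∂U/∂s)(w(s),s) ds = (a(t₀)/2)·‖ẇ(t₀)‖² + U(w(t₀),t₀). -/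

import Mathlib

open scoped RealInnerProductSpace

/-!
Pairing the equation with `ẇ` gives `a ⟪ẅ, ẇ⟫ + b ‖ẇ‖² + ⟪∇_w U, ẇ⟫ = 0`, so by the chain rule the
energy `E t = a t / 2 * ‖ẇ t‖² + U (w t, t)` has derivative `∂U/∂t - (b - ȧ / 2) ‖ẇ‖²` on `[t₀, ∞)`.
The law is the fundamental theorem of calculus for `E` on `[t₀, t]`.
-/

section PartialDerivatives

variable {E F : Type*} [NormedAddCommGroup E] [NormedSpace ℝ E]
  [NormedAddCommGroup F] [NormedSpace ℝ F] {U : E × ℝ → F}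

theorem fderiv_comp_prodMk_left_apply {x : E} {s : ℝ} (hU : DifferentiableAt ℝ U (x, s))
    (v : E) : fderiv ℝ (fun y => U (y, s)) x v = fderiv ℝ U (x, s) (v, 0) := by
  have h : HasFDerivAt (fun y => U (y, s)) _ x :=
    hU.hasFDerivAt.comp x (hasFDerivAt_prodMk_left x s)
  rw [h.fderiv]
  rfl

theorem deriv_comp_prodMk_right {x : E} {s : ℝ} (hU : DifferentiableAt ℝ U (x, s)) :
    deriv (fun r => U (x, r)) s = fderiv ℝ U (x, s) (0, 1) :=
  (hU.hasFDerivAt.comp_hasDerivAt s ((hasDerivAt_const s x).prodMk (hasDerivAt_id s))).deriv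

theorem continuous_deriv_comp_prodMk_right (hU : ContDiff ℝ 1 U) {γ : ℝ → E}
    (hγ : Continuous γ) : Continuous fun s => deriv (fun r => U (γ s, r)) s := by
  simp_rw [deriv_comp_prodMk_right (hU.differentiable one_ne_zero _)]
  exact ((hU.continuous_fderiv one_ne_zero).comp (hγ.prodMk continuous_id)).clm_apply
    continuous_const

theorem hasDerivAt_comp_prodMk_self {γ : ℝ → E} {v : E} {s : ℝ}
    (hU : DifferentiableAt ℝ U (γ s, s)) (hγ : HasDerivAt γ v s) :
    HasDerivAt (fun r => U (γ r, r))
      (fderiv ℝ (fun y => U (y, s)) (γ s) v + deriv (fun r => U (γ s, r)) s) s := by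
  have h : HasDerivAt (fun r => U (γ r, r)) _ s :=
    hU.hasFDerivAt.comp_hasDerivAt (f := fun r => (γ r, r)) s (hγ.prodMk (hasDerivAt_id s))
  rwa [fderiv_comp_prodMk_left_apply hU, deriv_comp_prodMk_right hU, ← map_add,
    Prod.mk_add_mk, add_zero, zero_add]

end PartialDerivatives

section Energy

variable {H : Type*} [NormedAddCommGroup H] [InnerProductSpace ℝ H] [CompleteSpace H]

noncomputable def energy (a : ℝ → ℝ) (U : H × ℝ → ℝ) (w : ℝ → H) (t : ℝ) : ℝ :=
  a t / 2 * ‖deriv w t‖ ^ 2 + U (w t, t)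

theorem hasDerivAt_energy {a b : ℝ → ℝ} {U : H × ℝ → ℝ} {w : ℝ → H} {s : ℝ}
    (ha : DifferentiableAt ℝ a s) (hw : DifferentiableAt ℝ w s)
    (hw' : DifferentiableAt ℝ (deriv w) s) (hU : DifferentiableAt ℝ U (w s, s))
    (hode : a s • deriv (deriv w) s + b s • deriv w s
      + gradient (fun x => U (x, s)) (w s) = 0) :
    HasDerivAt (energy a U w)
      (deriv (fun r => U (w s, r)) s - (b s - deriv a s / 2) * ‖deriv w s‖ ^ 2) s := by
  have hderiv : HasDerivAt (energy a U w) _ s :=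
    ((ha.hasDerivAt.div_const 2).mul hw'.hasDerivAt.norm_sq).add
      (hasDerivAt_comp_prodMk_self hU hw.hasDerivAt)
  have hode_along := congrArg (⟪·, deriv w s⟫) hode
  simp only [inner_add_left, real_inner_smul_left, real_inner_self_eq_norm_sq, inner_zero_left,
    inner_gradient_left] at hode_along
  refine hderiv.congr_deriv ?_
  rw [real_inner_comm]
  linear_combination hode_along

end Energy

theorem energy_conservation_law
    {H : Type*} [NormedAddCommGroup H] [InnerProductSpace ℝ H] [FiniteDimensional ℝ H]
    (a b : ℝ → ℝ) (U : H × ℝ → ℝ) (w : ℝ → H) (t₀ : ℝ)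
    (ha : ContDiff ℝ 1 a) (hb : Continuous b) (hU : ContDiff ℝ 1 U)
    (hw : ContDiff ℝ 2 w)
    (hode : ∀ t ≥ t₀, a t • deriv (deriv w) t + b t • deriv w t
      + gradient (fun x => U (x, t)) (w t) = 0) :
    ∀ t ≥ t₀,
      (a t / 2) * ‖deriv w t‖ ^ 2
        + (∫ s in t₀..t, (b s - deriv a s / 2) * ‖deriv w s‖ ^ 2)
        + U (w t, t)
        - (∫ s in t₀..t, deriv (fun r => U (w s, r)) s)
      = (a t₀ / 2) * ‖deriv w t₀‖ ^ 2 + U (w t₀, t₀) := by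
  intro t ht
  have hw' : ContDiff ℝ 1 (deriv w) := (contDiff_succ_iff_deriv.1 hw).2.2
  have hdissipation : Continuous fun s => (b s - deriv a s / 2) * ‖deriv w s‖ ^ 2 :=
    (hb.sub ((ha.continuous_deriv le_rfl).div_const 2)).mul (hw'.continuous.norm.pow 2)
  have hpartial : Continuous fun s => deriv (fun r => U (w s, r)) s :=
    continuous_deriv_comp_prodMk_right hU hw.continuous
  have hderiv : ∀ s ∈ Set.uIcc t₀ t, HasDerivAt (energy a U w)
      (deriv (fun r => U (w s, r)) s - (b s - deriv a s / 2) * ‖deriv w s‖ ^ 2) s := by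
    intro s hs
    rw [Set.uIcc_of_le ht] at hs
    exact hasDerivAt_energy (ha.differentiable one_ne_zero s) (hw.differentiable two_ne_zero s)
      (hw'.differentiable one_ne_zero s) (hU.differentiable one_ne_zero _) (hode s hs.1)
  have hFTC := intervalIntegral.integral_eq_sub_of_hasDerivAt hderiv
    ((hpartial.sub hdissipation).intervalIntegrable _ _)
  rw [intervalIntegral.integral_sub (hpartial.intervalIntegrable _ _)
    (hdissipation.intervalIntegrable _ _)] at hFTC
  simp only [energy] at hFTC
  linarith
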